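/- arXiv:1105.5747 — 3 statements merged into one kernel-verified Lean document; each statement's English description precedes it below -/
import Mathlib

section
/- Let S ⊆ E_n be a system of equations in variables x_1,…,x_n, where E_n consists of equations of the forms x_i = 1, x_i + x_j = x_k, and x_i · x_j = x_k. Define S̃ to be the system obtained from S by removing each equation x_i = 1 and replacing it with the n equations x_i · x_j = x_j for j = 1,…,n. Then the set of integer solutions of S̃ equals the set of integer solutions of S together with the zero tuple (0,…,0). -/
/-- A system `S ⊆ E_n` is encoded by the set `one` of indices `i` with the
equation `x_i = 1` in `S`, and sets `add`, `mul` of index triples `(i,j,k)`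
with `x_i + x_j = x_k`, resp. `x_i * x_j = x_k`, in `S`.  The system `S̃`
replaces each equation `x_i = 1` by the `n` equations `x_i * x_j = x_j`
(`j = 1,…,n`).  The integer solutions of `S̃` are exactly the integer
solutions of `S` together with the zero tuple. -/
theorem stmt_7 (n : ℕ) (one : Set (Fin n))
    (add mul : Set (Fin n × Fin n × Fin n)) :
    {x : Fin n → ℤ |
        (∀ i ∈ one, ∀ j : Fin n, x i * x j = x j) ∧
        (∀ p ∈ add, x p.1 + x p.2.1 = x p.2.2) ∧
        (∀ p ∈ mul, x p.1 * x p.2.1 = x p.2.2)} =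
      {x : Fin n → ℤ |
        (∀ i ∈ one, x i = 1) ∧
        (∀ p ∈ add, x p.1 + x p.2.1 = x p.2.2) ∧
        (∀ p ∈ mul, x p.1 * x p.2.1 = x p.2.2)} ∪ {(fun _ => 0 : Fin n → ℤ)} := by
  ext x
  simp only [Set.mem_setOf_eq, Set.mem_union, Set.mem_singleton_iff]
  constructor
  · rintro ⟨h1, h2, h3⟩
    by_cases hz : ∀ j : Fin n, x j = 0
    · right; funext j; exact hz j
    · left
      push_neg at hz
      obtain ⟨j, hj⟩ := hz
      refine ⟨fun i hi => ?_, h2, h3⟩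
      have := h1 i hi j
      have : (x i - 1) * x j = 0 := by ring_nf; linarith [h1 i hi j]
      rcases mul_eq_zero.1 this with h | h
      · linarith
      · exact absurd h hj
  · rintro (⟨h1, h2, h3⟩ | rfl)
    · exact ⟨fun i hi j => by rw [h1 i hi, one_mul], h2, h3⟩
    · exact ⟨fun _ _ _ => by ring, fun p _ => by ring, fun p _ => by ring⟩
end

section
/- Let n ≤ m be positive integers. Suppose (x_1,…,x_n) ∈ ℤ^n with 2^{2^{m−1}} < |x_1| ≤ 2^{2^m} is a counterexample to Λ_n, i.e., for all (y_1,…,y_n) ∈ ℤ^n preserving every relation x_i + x_j = x_k and x_i · x_j = x_k that holds among the x's, we have |y_i| ≤ |x_1| for all i. Then the m-tuple (x_1,…,x_1, x_2,…,x_n), with x_1 repeated m−n+1 times, is a counterexample to Λ_m: for all (y_1,…,y_m) ∈ ℤ^m preserving every additive and multiplicative relation among its coordinates, |y_i| ≤ |x_1| for all i, while 2^{2^{m−1}} < |x_1|. -/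
/-- The `m`-tuple `(x_1,…,x_1, x_2,…,x_n)` with `x_1` repeated `m - n + 1`
times, using 1-based indexing via functions `ℕ → ℤ`. -/
def extTuple (n m : ℕ) (x : ℕ → ℤ) : ℕ → ℤ :=
  fun i => if i ≤ m - n + 1 then x 1 else x (i - (m - n))

/-- If `(x_1,…,x_n)` with `2^(2^(m-1)) < |x_1| ≤ 2^(2^m)` is a counterexample
to `Λ_n` (every tuple `(y_1,…,y_n)` preserving all additive and multiplicative
relations among the `x`'s satisfies `|y_i| ≤ |x_1|`), then the `m`-tuple
`(x_1,…,x_1, x_2,…,x_n)` is a counterexample to `Λ_m`. -/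
theorem stmt_13 (n m : ℕ) (hn : 1 ≤ n) (hnm : n ≤ m) (x : ℕ → ℤ)
    (hlo : (2 : ℤ) ^ 2 ^ (m - 1) < |x 1|) (hhi : |x 1| ≤ (2 : ℤ) ^ 2 ^ m)
    (hce : ∀ y : ℕ → ℤ,
      (∀ i j k : ℕ, 1 ≤ i → i ≤ n → 1 ≤ j → j ≤ n → 1 ≤ k → k ≤ n →
        (x i + x j = x k → y i + y j = y k) ∧
        (x i * x j = x k → y i * y j = y k)) →
      ∀ i : ℕ, 1 ≤ i → i ≤ n → |y i| ≤ |x 1|) :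
    (2 : ℤ) ^ 2 ^ (m - 1) < |extTuple n m x 1| ∧
    ∀ y : ℕ → ℤ,
      (∀ i j k : ℕ, 1 ≤ i → i ≤ m → 1 ≤ j → j ≤ m → 1 ≤ k → k ≤ m →
        (extTuple n m x i + extTuple n m x j = extTuple n m x k →
          y i + y j = y k) ∧
        (extTuple n m x i * extTuple n m x j = extTuple n m x k →
          y i * y j = y k)) →
      ∀ i : ℕ, 1 ≤ i → i ≤ m → |y i| ≤ |extTuple n m x 1| := by
  have hext1 : extTuple n m x 1 = x 1 := by
    simp [extTuple]
  refine ⟨by rw [hext1]; exact hlo, ?_⟩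
  intro y hy i hi1 him
  rw [hext1]
  -- the embedding of indices {1,…,n} into {1,…,m}, sending 1 to t
  have key : ∀ t : ℕ, 1 ≤ t → t ≤ m - n + 1 →
      ∀ i : ℕ, 1 ≤ i → i ≤ n →
        |y (if i = 1 then t else i + (m - n))| ≤ |x 1| := by
    intro t ht1 ht2
    set σ : ℕ → ℕ := fun i => if i = 1 then t else i + (m - n) with hσ
    have hσval : ∀ i : ℕ, 1 ≤ i → i ≤ n → extTuple n m x (σ i) = x i := by
      intro i hi1 hin
      by_cases h : i = 1
      · subst h
        simp only [hσ, if_pos rfl, extTuple, if_pos ht2]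
      · have h2 : 2 ≤ i := by omega
        simp only [hσ, if_neg h, extTuple]
        rw [if_neg (by omega)]
        congr 1
        omega
    have hσrange : ∀ i : ℕ, 1 ≤ i → i ≤ n → 1 ≤ σ i ∧ σ i ≤ m := by
      intro i hi1 hin
      by_cases h : i = 1
      · subst h; simp only [hσ, if_pos rfl]; omega
      · simp only [hσ, if_neg h]; omega
    exact hce (fun i => y (σ i)) (fun i j k hi1 hin hj1 hjn hk1 hkn => by
      obtain ⟨hi1', hi2'⟩ := hσrange i hi1 hin
      obtain ⟨hj1', hj2'⟩ := hσrange j hj1 hjn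
      obtain ⟨hk1', hk2'⟩ := hσrange k hk1 hkn
      have := hy (σ i) (σ j) (σ k) hi1' hi2' hj1' hj2' hk1' hk2'
      rw [hσval i hi1 hin, hσval j hj1 hjn, hσval k hk1 hkn] at this
      exact this)
  by_cases h : i ≤ m - n + 1
  · have := key i hi1 h 1 le_rfl hn
    simpa using this
  · have h2 : 2 ≤ i - (m - n) := by omega
    have h3 : i - (m - n) ≤ n := by omega
    have := key 1 le_rfl (by omega) (i - (m - n)) (by omega) h3
    rw [if_neg (by omega)] at this
    have heq : i - (m - n) + (m - n) = i := by omega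
    rwa [heq] at this
end

section
/- If a, b, c, d, e, f are integers and the equation a·x² + b·x·y + c·y² + d·x + e·y + f = 0 has at least one integer solution with max(|x|, |y|) > 20 · (max(|a|,|b|,|c|,|d|,|e|,|f|))⁴, then the equation has infinitely many integer solutions. -/
/-!
For `c ≠ 0`, completing the square in `y` turns the equation into `z² = D x² + g x + h` with
`z = 2cy + bx + e` and `D = b² - 4ac`. If `D < 0` this bounds `x`. If `D = 0` the curve is a
parabola or a pair of parallel lines, with infinitely many integer points as soon as it has one.
If `D = m² ≠ 0`, then `(2mz - 2Dx - g) (-2mz - 2Dx - g) = g² - 4Dh`: either one factor vanishes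
along a rational line through the point, or both factors divide a nonzero constant, which bounds
`x`. If `D` is not a square, `(2Dx + g) + 2z√D` lies in `ℤ√D` with norm `g² - 4Dh`, and
multiplying it by the powers of a Pell unit congruent to `1` modulo `4cD` gives infinitely many
integer points, unless `2Dx + g = 0`. Each bound on `|x|` is at most `20 M⁴`, and exchanging
`x` and `y` bounds `|y|` as well.
-/

theorem Int.abs_add_abs_le_abs_mul_add_one {u v : ℤ} (hu : u ≠ 0) (hv : v ≠ 0) :
    |u| + |v| ≤ |u * v| + 1 := by
  rw [abs_mul]
  nlinarith [Int.one_le_abs hu, Int.one_le_abs hv]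

theorem Pell.exists_pos_solution₁_dvd_sub_one {D L : ℤ} (hD : 0 < D) (hsq : ¬IsSquare D)
    (hL : L ≠ 0) : ∃ u : Pell.Solution₁ D, 0 < u.x ∧ 0 < u.y ∧ L ∣ u.x - 1 ∧ L ∣ u.y := by
  have hsq' : ¬IsSquare (D * L ^ 2) := by
    rintro ⟨r, hr⟩
    obtain ⟨t, rfl⟩ : L ∣ r := (Int.pow_dvd_pow_iff two_ne_zero).1 ⟨D, by linear_combination -hr⟩
    exact hsq ⟨t, mul_right_cancel₀ (pow_ne_zero 2 hL) (by linear_combination hr)⟩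
  obtain ⟨s, hsx, hsy⟩ := Pell.Solution₁.exists_pos_of_not_isSquare (by positivity) hsq'
  -- the square of `s.x + |L| * s.y * √D`
  refine ⟨.mk (1 + 2 * D * L ^ 2 * s.y ^ 2) (2 * s.x * |L| * s.y) (by
    linear_combination (-4 * D * L ^ 2 * s.y ^ 2) * s.prop - 4 * D * s.x ^ 2 * s.y ^ 2 * sq_abs L),
    ?_, ?_, ?_, ?_⟩ <;> simp only [Pell.Solution₁.x_mk, Pell.Solution₁.y_mk]
  · positivity
  · positivity
  · exact ⟨2 * D * L * s.y ^ 2, by ring⟩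
  · exact ((self_dvd_abs L).mul_left _).mul_right _

theorem Zsqrtd.noZeroDivisors_of_not_isSquare {d : ℤ} (hd : ¬IsSquare d) :
    NoZeroDivisors (ℤ√d) where
  eq_zero_or_eq_zero_of_mul_eq_zero {a b} h := by
    have := congrArg Zsqrtd.norm h
    rw [Zsqrtd.norm_mul, Zsqrtd.norm_zero, mul_eq_zero] at this
    simpa only [Zsqrtd.norm_eq_zero fun n hn => hd ⟨n, hn⟩] using this

theorem Zsqrtd.infinite_setOf_norm_eq_of_dvd_sub {D L : ℤ} (hD : 0 < D) (hsq : ¬IsSquare D)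
    (hL : L ≠ 0) {w : ℤ√D} (hw : w ≠ 0) :
    {v : ℤ√D | v.norm = w.norm ∧ (L : ℤ√D) ∣ v - w}.Infinite := by
  have := Zsqrtd.noZeroDivisors_of_not_isSquare hsq
  obtain ⟨u, hux, huy, hLx, hLy⟩ := Pell.exists_pos_solution₁_dvd_sub_one hD hsq hL
  have hu : ¬IsOfFinOrder u := by
    rw [isOfFinOrder_iff_pow_eq_one]
    rintro ⟨n, hn, hun⟩
    obtain ⟨k, rfl⟩ := Nat.exists_eq_succ_of_ne_zero hn.ne'
    simpa [hun] using Pell.Solution₁.y_pow_succ_pos hux huy k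
  refine Set.infinite_of_injective_forall_mem (f := fun n : ℕ => (u : ℤ√D) ^ n * w)
    (fun n m h => injective_pow_iff_not_isOfFinOrder.2 hu
      (Subtype.val_injective (mul_right_cancel₀ hw h))) (fun n => ⟨?_, ?_⟩)
  · rw [Zsqrtd.norm_mul, Zsqrtd.norm_eq_one_iff_mem_unitary.2 (pow_mem u.2 n), one_mul]
  · have hLu : (L : ℤ√D) ∣ (u : ℤ√D) - 1 := (Zsqrtd.intCast_dvd _ _).2
      ⟨hLx, by rwa [Zsqrtd.im_sub, Zsqrtd.im_one, sub_zero]⟩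
    rw [← sub_one_mul]
    exact (hLu.trans (sub_one_dvd_pow_sub_one _ n)).mul_right w

structure Conic where
  a : ℤ
  b : ℤ
  c : ℤ
  d : ℤ
  e : ℤ
  f : ℤ

namespace Conic

variable (Q : Conic)

def eval (x y : ℤ) : ℤ :=
  Q.a * x ^ 2 + Q.b * x * y + Q.c * y ^ 2 + Q.d * x + Q.e * y + Q.f

def zeros : Set (ℤ × ℤ) := {p | Q.eval p.1 p.2 = 0}

def height : ℤ := max |Q.a| (max |Q.b| (max |Q.c| (max |Q.d| (max |Q.e| |Q.f|))))

def disc : ℤ := Q.b ^ 2 - 4 * Q.a * Q.c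

-- `disc * x ^ 2 + linDisc * x + constDisc` is the discriminant of `Q.eval x y` as a polynomial
-- in `y`.
def linDisc : ℤ := 2 * Q.b * Q.e - 4 * Q.c * Q.d

def constDisc : ℤ := Q.e ^ 2 - 4 * Q.c * Q.f

def swap : Conic := ⟨Q.c, Q.b, Q.a, Q.e, Q.d, Q.f⟩

theorem eval_swap (x y : ℤ) : Q.swap.eval x y = Q.eval y x := by
  simp only [eval, swap]; ring

theorem height_swap : Q.swap.height = Q.height := by
  simp only [height, swap]; omega

theorem disc_swap : Q.swap.disc = Q.disc := by
  simp only [disc, swap]; ring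

theorem zeros_infinite_of_swap (h : Q.swap.zeros.Infinite) : Q.zeros.Infinite := by
  refine Set.Infinite.of_image Prod.swap (h.mono fun p hp => ⟨p.swap, ?_, p.swap_swap⟩)
  simpa [zeros, eval_swap] using hp

theorem abs_le_height :
    |Q.a| ≤ Q.height ∧ |Q.b| ≤ Q.height ∧ |Q.c| ≤ Q.height ∧ |Q.d| ≤ Q.height ∧
      |Q.e| ≤ Q.height ∧ |Q.f| ≤ Q.height := by
  simp only [height, le_max_iff, le_refl, true_or, or_true, and_self]

theorem height_nonneg : 0 ≤ Q.height := (abs_nonneg _).trans Q.abs_le_height.1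

theorem one_le_height (hD : Q.disc ≠ 0) : 1 ≤ Q.height := by
  obtain ⟨ha, hb, -⟩ := Q.abs_le_height
  by_contra! h
  have ha : Q.a = 0 := abs_nonpos_iff.1 (by omega)
  have hb : Q.b = 0 := abs_nonpos_iff.1 (by omega)
  exact hD (by simp [disc, ha, hb])

theorem abs_linDisc_le : |Q.linDisc| ≤ 6 * Q.height ^ 2 := by
  obtain ⟨-, hb, hc, hd, he, -⟩ := Q.abs_le_height
  have := Q.height_nonneg
  calc _ ≤ 2 * |Q.b| * |Q.e| + 4 * |Q.c| * |Q.d| := by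
        grw [linDisc, abs_sub]; simp only [abs_mul]; norm_num
    _ ≤ 2 * Q.height * Q.height + 4 * Q.height * Q.height := by gcongr
    _ = 6 * Q.height ^ 2 := by ring

theorem abs_constDisc_le : |Q.constDisc| ≤ 5 * Q.height ^ 2 := by
  obtain ⟨-, -, hc, -, he, hf⟩ := Q.abs_le_height
  have := Q.height_nonneg
  calc _ ≤ |Q.e| ^ 2 + 4 * |Q.c| * |Q.f| := by
        grw [constDisc, abs_sub]; simp only [abs_mul, abs_pow]; norm_num
    _ ≤ Q.height ^ 2 + 4 * Q.height * Q.height := by gcongr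
    _ = 5 * Q.height ^ 2 := by ring

theorem four_c_mul_eval (x y : ℤ) :
    4 * Q.c * Q.eval x y =
      (2 * Q.c * y + Q.b * x + Q.e) ^ 2 - (Q.disc * x ^ 2 + Q.linDisc * x + Q.constDisc) := by
  simp only [eval, disc, linDisc, constDisc]; ring

theorem zeros_infinite_of_line {x y u w : ℤ} (hp : Q.eval x y = 0) (huw : (u, w) ≠ 0)
    (hdir : Q.a * u ^ 2 + Q.b * u * w + Q.c * w ^ 2 = 0)
    (hgrad : (2 * Q.a * x + Q.b * y + Q.d) * u + (Q.b * x + 2 * Q.c * y + Q.e) * w = 0) :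
    Q.zeros.Infinite := by
  refine Set.infinite_of_injective_forall_mem (f := fun t : ℤ => (x + t * u, y + t * w))
    (fun t s hts => ?_) (fun t => ?_)
  · simp only [Prod.mk.injEq, add_right_inj] at hts
    rcases eq_or_ne u 0 with rfl | hu
    · exact mul_right_cancel₀ (by simpa using huw) hts.2
    · exact mul_right_cancel₀ hu hts.1
  · show Q.eval _ _ = 0
    simp only [eval] at hp ⊢
    linear_combination hp + t * hgrad + t ^ 2 * hdir

theorem zeros_infinite_of_sqrt_disc {x y s : ℤ} (hp : Q.eval x y = 0) (hc : Q.c ≠ 0)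
    (hs : s ^ 2 = Q.disc)
    (hF : 2 * s * (2 * Q.c * y + Q.b * x + Q.e) = 2 * Q.disc * x + Q.linDisc) :
    Q.zeros.Infinite := by
  refine Q.zeros_infinite_of_line hp (u := 2 * Q.c) (w := s - Q.b) (by simp [hc]) ?_ ?_
  · simp only [disc] at hs
    linear_combination Q.c * hs
  · refine mul_left_cancel₀ two_ne_zero ?_
    simp only [disc, linDisc] at hs hF
    linear_combination hF

theorem zeros_infinite_of_disc_eq_zero_of_c_ne_zero {x y : ℤ} (hp : Q.eval x y = 0)
    (hD : Q.disc = 0) (hc : Q.c ≠ 0) : Q.zeros.Infinite := by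
  by_cases hg : Q.linDisc = 0
  · exact Q.zeros_infinite_of_sqrt_disc hp hc (s := 0) (by simp [hD]) (by simp [hD, hg])
  obtain ⟨a, b, c, d, e, f⟩ := Q
  simp only [eval, disc, linDisc] at hp hD hc hg ⊢
  set g := 2 * b * e - 4 * c * d
  set z := 2 * c * y + b * x + e
  -- on the parabola `z ^ 2 = g * x + h`, the point with `z + 2 * c * g * t` in place of `z`
  refine Set.infinite_of_injective_forall_mem (fun t s hts => ?_) (fun t => ?_)
    (f := fun t : ℤ => (x + 4 * c * z * t + 4 * c ^ 2 * g * t ^ 2,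
      y + g * t - 2 * b * z * t - 2 * b * c * g * t ^ 2))
  · simp only [Prod.mk.injEq] at hts
    exact mul_left_cancel₀ (by positivity)
      (by linear_combination b * hts.1 + 2 * c * hts.2 : 2 * c * g * t = 2 * c * g * s)
  · show eval _ _ _ = 0
    simp only [eval]
    linear_combination
      hp - t * (z + c * g * t) * (2 * x + 4 * c * z * t + 4 * c ^ 2 * g * t ^ 2) * hD

theorem zeros_infinite_of_disc_eq_zero {x y : ℤ} (hp : Q.eval x y = 0) (hD : Q.disc = 0) :
    Q.zeros.Infinite := by
  rcases eq_or_ne Q.c 0 with hc | hc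
  swap
  · exact Q.zeros_infinite_of_disc_eq_zero_of_c_ne_zero hp hD hc
  rcases eq_or_ne Q.a 0 with ha | ha
  swap
  · exact Q.zeros_infinite_of_swap <| Q.swap.zeros_infinite_of_disc_eq_zero_of_c_ne_zero
      (x := y) (y := x) (by rwa [eval_swap]) (by rwa [disc_swap]) ha
  have hb : Q.b = 0 := by simpa [disc, ha, hc] using hD
  rcases eq_or_ne Q.d 0 with hd | hd
  · exact Q.zeros_infinite_of_line hp (u := 1) (w := 0) (by simp) (by simp [ha])
      (by simp [ha, hb, hd])
  · exact Q.zeros_infinite_of_line hp (u := Q.e) (w := -Q.d) (by simp [hd])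
      (by simp [ha, hb, hc]) (by simp [ha, hb, hc]; ring)

theorem abs_le_of_disc_neg {x y : ℤ} (hp : Q.eval x y = 0) (hD : Q.disc < 0) :
    |x| ≤ 7 * Q.height ^ 2 := by
  have hM := Q.one_le_height hD.ne
  have hsq := Q.four_c_mul_eval x y
  rw [hp, mul_zero] at hsq
  have hg := mul_le_mul_of_nonneg_right Q.abs_linDisc_le (abs_nonneg x)
  rw [← abs_mul] at hg
  have hx2 : |x| ^ 2 ≤ 6 * Q.height ^ 2 * |x| + 5 * Q.height ^ 2 := by
    rw [sq_abs]
    nlinarith [sq_nonneg (2 * Q.c * y + Q.b * x + Q.e), le_abs_self (Q.linDisc * x),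
      le_abs_self Q.constDisc, Q.abs_constDisc_le]
  nlinarith [abs_nonneg x]

theorem abs_le_of_forall_sqrt_disc {x y m : ℤ} (hp : Q.eval x y = 0) (hm : m ^ 2 = Q.disc)
    (hm0 : m ≠ 0) (hF : ∀ s, s ^ 2 = Q.disc →
      2 * s * (2 * Q.c * y + Q.b * x + Q.e) ≠ 2 * Q.disc * x + Q.linDisc) :
    |x| ≤ 20 * Q.height ^ 4 := by
  set z := 2 * Q.c * y + Q.b * x + Q.e
  set F₁ := 2 * m * z - (2 * Q.disc * x + Q.linDisc)
  set F₂ := 2 * (-m) * z - (2 * Q.disc * x + Q.linDisc)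
  have hF₁ : F₁ ≠ 0 := sub_ne_zero.2 (hF m hm)
  have hF₂ : F₂ ≠ 0 := sub_ne_zero.2 (hF (-m) (by rwa [neg_sq]))
  have hprod : F₁ * F₂ = Q.linDisc ^ 2 - 4 * Q.disc * Q.constDisc := by
    have := Q.four_c_mul_eval x y
    rw [hp, mul_zero] at this
    linear_combination 4 * Q.disc * this - 4 * z ^ 2 * hm
  have hD : 1 ≤ Q.disc := by rw [← hm, ← sq_abs]; exact one_le_pow₀ (Int.one_le_abs hm0)
  have hM := Q.one_le_height (by omega)
  have hg := Q.abs_linDisc_le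
  have hN : |F₁ * F₂| ≤ 36 * Q.height ^ 4 + 20 * Q.disc * Q.height ^ 2 :=
    calc |F₁ * F₂| ≤ |Q.linDisc| ^ 2 + 4 * Q.disc * |Q.constDisc| := by
          grw [hprod, abs_sub]
          simp only [abs_mul, abs_pow, abs_of_pos (by omega : 0 < Q.disc)]
          norm_num
      _ ≤ (6 * Q.height ^ 2) ^ 2 + 4 * Q.disc * (5 * Q.height ^ 2) := by
          gcongr
          exact Q.abs_constDisc_le
      _ = _ := by ring
  have hx : 4 * Q.disc * |x| ≤ |F₁| + |F₂| + 2 * |Q.linDisc| :=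
    calc 4 * Q.disc * |x| = |F₁ + F₂ + 2 * Q.linDisc| := by
          rw [show F₁ + F₂ + 2 * Q.linDisc = -(4 * Q.disc * x) by ring, abs_neg, abs_mul,
            abs_of_pos (by omega : 0 < 4 * Q.disc)]
      _ ≤ _ := by grw [abs_add_le, abs_add_le, abs_mul]; norm_num
  have hsum := Int.abs_add_abs_le_abs_mul_add_one hF₁ hF₂
  have hM2 : Q.height ^ 2 ≤ Q.height ^ 4 := pow_le_pow_right₀ hM (by norm_num)
  by_contra! hx'
  have := mul_le_mul_of_nonneg_left (Int.add_one_le_of_lt hx') (by omega : 0 ≤ 4 * Q.disc)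
  nlinarith [mul_le_mul_of_nonneg_left hM2 (by omega : 0 ≤ Q.disc)]

theorem infinite_or_abs_le_of_c_eq_zero {x y : ℤ} (hp : Q.eval x y = 0) (hc : Q.c = 0)
    (hb : Q.b ≠ 0) : Q.zeros.Infinite ∨ |x| ≤ 4 * Q.height ^ 3 := by
  set K := Q.b ^ 2 * y + Q.a * Q.b * x + Q.b * Q.d - Q.a * Q.e
  by_cases h₁ : Q.b * x + Q.e = 0
  · exact .inl <| Q.zeros_infinite_of_line hp (u := 0) (w := 1) (by simp) (by simp [hc])
      (by simp [hc, h₁])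
  by_cases h₂ : K = 0
  · exact .inl <| Q.zeros_infinite_of_line hp (u := Q.b) (w := -Q.a) (by simp [hb])
      (by simp [hc]; ring) (by simp [hc]; linear_combination h₂)
  right
  obtain ⟨ha, hb', -, hd, he, hf⟩ := Q.abs_le_height
  have := Q.height_nonneg
  have hfac : (Q.b * x + Q.e) * K = -(Q.a * Q.e ^ 2 - Q.b * Q.d * Q.e + Q.b ^ 2 * Q.f) := by
    simp only [eval, hc] at hp
    linear_combination Q.b ^ 2 * hp
  have hbx : |Q.b * x + Q.e| ≤ 3 * Q.height ^ 3 :=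
    calc |Q.b * x + Q.e| ≤ |(Q.b * x + Q.e) * K| := by
          rw [abs_mul]; exact le_mul_of_one_le_right (abs_nonneg _) (Int.one_le_abs h₂)
      _ ≤ |Q.a| * |Q.e| ^ 2 + |Q.b| * |Q.d| * |Q.e| + |Q.b| ^ 2 * |Q.f| := by
          grw [hfac, abs_neg, abs_add_le, abs_sub]; simp only [abs_mul, abs_pow]; rfl
      _ ≤ Q.height * Q.height ^ 2 + Q.height * Q.height * Q.height + Q.height ^ 2 * Q.height := by
          gcongr
      _ = 3 * Q.height ^ 3 := by ring
  have hM := (Int.one_le_abs hb).trans hb'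
  calc |x| ≤ |Q.b| * |x| := le_mul_of_one_le_left (abs_nonneg x) (Int.one_le_abs hb)
    _ ≤ |Q.b * x + Q.e| + |Q.e| := by rw [← abs_mul]; simpa using abs_sub (Q.b * x + Q.e) Q.e
    _ ≤ 4 * Q.height ^ 3 := by nlinarith [pow_le_pow_right₀ hM (by norm_num : 1 ≤ 3)]

theorem infinite_or_abs_le_of_disc_eq_sq {x y m : ℤ} (hp : Q.eval x y = 0) (hm : m ^ 2 = Q.disc)
    (hm0 : m ≠ 0) : Q.zeros.Infinite ∨ |x| ≤ 20 * Q.height ^ 4 := by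
  rcases eq_or_ne Q.c 0 with hc | hc
  · have hb : Q.b ≠ 0 := by rintro hb; simp [disc, hb, hc, hm0] at hm
    have hM := Q.one_le_height (by simp [disc, hc, hb])
    refine (Q.infinite_or_abs_le_of_c_eq_zero hp hc hb).imp_right fun hx => hx.trans ?_
    nlinarith [pow_le_pow_right₀ hM (by norm_num : 3 ≤ 4), pow_nonneg Q.height_nonneg 3]
  by_cases hF : ∃ s, s ^ 2 = Q.disc ∧
      2 * s * (2 * Q.c * y + Q.b * x + Q.e) = 2 * Q.disc * x + Q.linDisc
  · obtain ⟨s, hs, hF⟩ := hF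
    exact .inl (Q.zeros_infinite_of_sqrt_disc hp hc hs hF)
  · push Not at hF
    exact .inr (Q.abs_le_of_forall_sqrt_disc hp hm hm0 hF)

def normCoord (x y : ℤ) : ℤ√Q.disc :=
  ⟨2 * Q.disc * x + Q.linDisc, 2 * (2 * Q.c * y + Q.b * x + Q.e)⟩

theorem norm_normCoord (x y : ℤ) : (Q.normCoord x y).norm =
    Q.linDisc ^ 2 - 4 * Q.disc * Q.constDisc - 16 * Q.c * Q.disc * Q.eval x y := by
  rw [Zsqrtd.norm_def]
  dsimp only [normCoord]
  linear_combination 4 * Q.disc * Q.four_c_mul_eval x y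

theorem subset_image_normCoord {x y : ℤ} (hp : Q.eval x y = 0) (hc : Q.c ≠ 0)
    (hD : Q.disc ≠ 0) :
    {v : ℤ√Q.disc | v.norm = (Q.normCoord x y).norm ∧
      ((4 * Q.c * Q.disc : ℤ) : ℤ√Q.disc) ∣ v - Q.normCoord x y} ⊆
      (fun p => Q.normCoord p.1 p.2) '' Q.zeros := by
  rintro v ⟨hnorm, hdvd⟩
  obtain ⟨⟨k₁, hk₁⟩, ⟨k₂, hk₂⟩⟩ := (Zsqrtd.intCast_dvd _ _).1 hdvd
  simp only [Zsqrtd.re_sub, Zsqrtd.im_sub, normCoord] at hk₁ hk₂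
  have hv : Q.normCoord (x + 2 * Q.c * k₁) (y + Q.disc * k₂ - Q.b * k₁) = v := by
    ext <;> simp only [normCoord]
    · linear_combination -hk₁
    · linear_combination -hk₂
  refine ⟨(_, _), ?_, hv⟩
  rw [← hv, norm_normCoord, norm_normCoord, hp] at hnorm
  exact (mul_eq_zero.1 (by linear_combination -hnorm : 16 * Q.c * Q.disc * _ = 0)).resolve_left
    (by positivity)

theorem infinite_or_abs_le_of_not_isSquare {x y : ℤ} (hp : Q.eval x y = 0) (hD : 0 < Q.disc)
    (hsq : ¬IsSquare Q.disc) : Q.zeros.Infinite ∨ |x| ≤ 3 * Q.height ^ 2 := by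
  by_cases hW : 2 * Q.disc * x + Q.linDisc = 0
  · right
    have := Q.abs_linDisc_le
    rw [show Q.linDisc = -(2 * Q.disc * x) by omega, abs_neg, abs_mul,
      abs_of_pos (by positivity : 0 < 2 * Q.disc)] at this
    nlinarith [abs_nonneg x]
  · left
    have hc : Q.c ≠ 0 := fun hc => hsq ⟨Q.b, by simp [disc, hc, sq]⟩
    have hw : Q.normCoord x y ≠ 0 := fun h => hW (congrArg Zsqrtd.re h)
    exact ((Zsqrtd.infinite_setOf_norm_eq_of_dvd_sub hD hsq (by positivity) hw).mono
      (Q.subset_image_normCoord hp hc hD.ne')).of_image _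

theorem infinite_or_abs_le {x y : ℤ} (hp : Q.eval x y = 0) :
    Q.zeros.Infinite ∨ |x| ≤ 20 * Q.height ^ 4 := by
  rcases lt_trichotomy Q.disc 0 with hD | hD | hD
  · have hM := Q.one_le_height hD.ne
    refine .inr ((Q.abs_le_of_disc_neg hp hD).trans ?_)
    nlinarith [pow_le_pow_right₀ hM (by norm_num : 2 ≤ 4)]
  · exact .inl (Q.zeros_infinite_of_disc_eq_zero hp hD)
  by_cases hsq : IsSquare Q.disc
  · obtain ⟨m, hm⟩ := hsq
    exact Q.infinite_or_abs_le_of_disc_eq_sq hp (by rw [hm, sq])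
      (by rintro rfl; simp at hm; omega)
  · have hM := Q.one_le_height hD.ne'
    refine (Q.infinite_or_abs_le_of_not_isSquare hp hD hsq).imp_right fun hx => hx.trans ?_
    nlinarith [pow_le_pow_right₀ hM (by norm_num : 2 ≤ 4)]

end Conic

/-- If the quadratic Diophantine equation
`a·x² + b·x·y + c·y² + d·x + e·y + f = 0` has an integer solution of height
greater than `20 · M⁴`, where `M = max(|a|,|b|,|c|,|d|,|e|,|f|)`, then it has
infinitely many integer solutions. -/
theorem stmt_18 (a b c d e f : ℤ)
    (h : ∃ x y : ℤ,
      a * x ^ 2 + b * x * y + c * y ^ 2 + d * x + e * y + f = 0 ∧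
      20 * (max |a| (max |b| (max |c| (max |d| (max |e| |f|))))) ^ 4 <
        max |x| |y|) :
    {p : ℤ × ℤ |
      a * p.1 ^ 2 + b * p.1 * p.2 + c * p.2 ^ 2 + d * p.1 + e * p.2 + f =
        0}.Infinite := by
  obtain ⟨x, y, hp, hbig⟩ := h
  let Q : Conic := ⟨a, b, c, d, e, f⟩
  rcases Q.infinite_or_abs_le hp with hQ | hx
  · exact hQ
  rcases Q.swap.infinite_or_abs_le (x := y) (y := x) (by rwa [Conic.eval_swap]) with hQ | hy
  · exact Q.zeros_infinite_of_swap hQ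
  rw [Conic.height_swap] at hy
  exact absurd (max_le hx hy) hbig.not_ge
end
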